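/- Let (Ω, P) be a probability space, let k ≥ 1 and c ≥ 2, and for l = 1,…,k and i = 2,…,c let Z_i^l : Ω → ℝ be square-integrable random variables. Suppose there are real numbers α_i, β_i, e_i for i = 2,…,c such that: Var(Z_i^l) ≤ α_i for every l; Cov(Z_i^l, Z_i^m) ≤ β_i for every pair l ≠ m; and E[Z_i^l] ≥ e_i > 0 for every l. Define the equally weighted averages Z̄_i = (1/k)·Σ_{l=1}^k Z_i^l. Then P(Z̄_i > 0 for all i = 2,…,c) ≥ 1 − Σ_{i=2}^c (β_i + (α_i − β_i)/k)/e_i². -/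

import Mathlib

open MeasureTheory ProbabilityTheory

/-- Covariance of two real random variables:
`Cov(X,Y) = E[(X − E[X])(Y − E[Y])]`. -/
noncomputable def cov {Ω : Type*} [MeasurableSpace Ω] (μ : Measure Ω) (X Y : Ω → ℝ) : ℝ :=
  ∫ ω, (X ω - ∫ ω', X ω' ∂μ) * (Y ω - ∫ ω', Y ω' ∂μ) ∂μ

lemma integrable_mul_of_memL2 {Ω : Type*} [MeasurableSpace Ω] {μ : Measure Ω} {X Y : Ω → ℝ}
    (hX : MemLp X 2 μ) (hY : MemLp Y 2 μ) : Integrable (fun ω => X ω * Y ω) μ := by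
  have h : (1 : ENNReal) / 1 = 1 / 2 + 1 / 2 := by
    simp only [one_div, inv_one]
    exact ENNReal.inv_two_add_inv_two.symm

  have h2 : MemLp (X • Y) 1 μ := MemLp.smul (hpqr := ⟨by rw [inv_one]; exact ENNReal.inv_two_add_inv_two⟩) hY hX
  rw [memLp_one_iff_integrable] at h2
  exact h2

lemma variance_sum_eq_sum_cov {Ω : Type*} [MeasurableSpace Ω] (μ : Measure Ω)
    [IsProbabilityMeasure μ] {n : ℕ} (X : Fin n → Ω → ℝ) (hX : ∀ l, MemLp (X l) 2 μ) :
    variance (fun ω => ∑ l, X l ω) μ = ∑ l, ∑ m, cov μ (X l) (X m) := by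
  have hInt : ∀ l, Integrable (X l) μ := fun l => (hX l).integrable one_le_two
  have hS : MemLp (fun ω => ∑ l, X l ω) 2 μ := by
    have h := memLp_finset_sum' Finset.univ (fun l (_ : l ∈ Finset.univ) => hX l)
    have he : (∑ l, X l) = fun ω => ∑ l, X l ω := by funext ω; simp
    rwa [he] at h
  have hES : ∫ ω, (∑ l, X l ω) ∂μ = ∑ l, ∫ ω, X l ω ∂μ :=
    integral_finset_sum _ fun l _ => hInt l
  have hC : ∀ l m : Fin n, MemLp (fun ω => X l ω - ∫ ω', X l ω' ∂μ) 2 μ := fun l m =>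
    (hX l).sub (memLp_const _)
  have hMul : ∀ l m : Fin n,
      Integrable (fun ω => (X l ω - ∫ ω', X l ω' ∂μ) * (X m ω - ∫ ω', X m ω' ∂μ)) μ :=
    fun l m => integrable_mul_of_memL2 (hC l m) (hC m l)
  rw [variance_eq_integral hS.aemeasurable]
  change ∫ ω, ((((fun ω => ∑ l, X l ω) - fun _ => ∫ ω, (∑ l, X l ω) ∂μ) ^ (2 : ℕ) : Ω → ℝ)) ω ∂μ = _
  have hfun : ((fun ω => ∑ l, X l ω) - fun _ => ∫ ω, (∑ l, X l ω) ∂μ) ^ (2 : ℕ) =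
      fun ω => ∑ l, ∑ m, (X l ω - ∫ ω', X l ω' ∂μ) * (X m ω - ∫ ω', X m ω' ∂μ) := by
    funext ω
    simp only [Pi.pow_apply, Pi.sub_apply, hES]
    rw [← Finset.sum_sub_distrib, sq, Finset.sum_mul_sum]
  rw [hfun, integral_finset_sum _ (fun l _ => integrable_finset_sum _ (fun m _ => hMul l m))]
  exact Finset.sum_congr rfl fun l _ => integral_finset_sum _ fun m _ => hMul l m

theorem ensemble_top_class_probability_lower_bound
    {Ω : Type*} [MeasurableSpace Ω] (μ : Measure Ω) [IsProbabilityMeasure μ]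
    (k c : ℕ) (hk : 1 ≤ k) (hc : 2 ≤ c)
    (Z : Fin k → Fin (c - 1) → Ω → ℝ)
    (hZ : ∀ l i, MemLp (Z l i) 2 μ)
    (α β e : Fin (c - 1) → ℝ)
    (hvar : ∀ l i, variance (Z l i) μ ≤ α i)
    (hcov : ∀ l m i, l ≠ m → cov μ (Z l i) (Z m i) ≤ β i)
    (he : ∀ i, 0 < e i)
    (hmean : ∀ l i, e i ≤ ∫ ω, Z l i ω ∂μ)
    (Zbar : Fin (c - 1) → Ω → ℝ)
    (hZbar : ∀ i ω, Zbar i ω = (1 / (k : ℝ)) * ∑ l, Z l i ω) :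
    1 - ∑ i, (β i + (α i - β i) / k) / (e i) ^ 2 ≤
      (μ {ω | ∀ i, 0 < Zbar i ω}).toReal := by
  have hk0 : (0 : ℝ) < (k : ℝ) := by exact_mod_cast hk
  set B : Fin (c - 1) → ℝ := fun i => β i + (α i - β i) / k with hB
  -- variance bound for each Zbar i
  have hZbM : ∀ i, MemLp (Zbar i) 2 μ := by
    intro i
    have hS : MemLp (fun ω => ∑ l, Z l i ω) 2 μ := by
      have h := memLp_finset_sum' Finset.univ (fun l (_ : l ∈ Finset.univ) => hZ l i)
      have he' : (∑ l, Z l i) = fun ω => ∑ l, Z l i ω := by funext ω; simp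
      rwa [he'] at h
    have : Zbar i = fun ω => (1 / (k : ℝ)) * (fun ω' => ∑ l, Z l i ω') ω := by
      funext ω; rw [hZbar]
    rw [this]
    exact hS.const_mul _
  have hvarZb : ∀ i, variance (Zbar i) μ ≤ B i := by
    intro i
    have hvs : variance (fun ω => ∑ l, Z l i ω) μ = ∑ l, ∑ m, cov μ (Z l i) (Z m i) :=
      variance_sum_eq_sum_cov μ _ fun l => hZ l i
    have hdiag : ∀ l : Fin k, cov μ (Z l i) (Z l i) = variance (Z l i) μ := by
      intro l
      rw [variance_eq_integral (hZ l i).aemeasurable]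
      simp only [cov, Pi.pow_apply, Pi.sub_apply, sq]
    have hrow : ∀ l : Fin k, ∑ m, cov μ (Z l i) (Z m i) ≤ α i + ((k : ℝ) - 1) * β i := by
      intro l
      rw [← Finset.add_sum_erase _ _ (Finset.mem_univ l)]
      have h1 : cov μ (Z l i) (Z l i) ≤ α i := (hdiag l) ▸ hvar l i
      have h2 : ∑ m ∈ Finset.univ.erase l, cov μ (Z l i) (Z m i) ≤ ((k : ℝ) - 1) * β i := by
        have hcard : ((Finset.univ.erase l).card : ℝ) = (k : ℝ) - 1 := by
          rw [Finset.card_erase_of_mem (Finset.mem_univ l)]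
          simp [Nat.cast_sub hk]
        calc ∑ m ∈ Finset.univ.erase l, cov μ (Z l i) (Z m i)
            ≤ ∑ m ∈ Finset.univ.erase l, β i :=
              Finset.sum_le_sum fun m hm => hcov l m i (Finset.ne_of_mem_erase hm).symm
          _ = ((k : ℝ) - 1) * β i := by rw [Finset.sum_const, nsmul_eq_mul, hcard]
      linarith
    have hSbound : variance (fun ω => ∑ l, Z l i ω) μ ≤ (k : ℝ) * (α i + ((k : ℝ) - 1) * β i) := by
      rw [hvs]
      calc ∑ l, ∑ m, cov μ (Z l i) (Z m i) ≤ ∑ l : Fin k, (α i + ((k : ℝ) - 1) * β i) :=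
            Finset.sum_le_sum fun l _ => hrow l
        _ = (k : ℝ) * (α i + ((k : ℝ) - 1) * β i) := by
            rw [Finset.sum_const, nsmul_eq_mul]; simp
    have hvZ : variance (Zbar i) μ = (1 / (k : ℝ)) ^ 2 * variance (fun ω => ∑ l, Z l i ω) μ := by
      have : Zbar i = fun ω => (1 / (k : ℝ)) * (fun ω' => ∑ l, Z l i ω') ω := by
        funext ω; rw [hZbar]
      rw [this, variance_const_mul]
    rw [hvZ, hB]
    have h3 : (1 / (k : ℝ)) ^ 2 * ((k : ℝ) * (α i + ((k : ℝ) - 1) * β i)) =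
        β i + (α i - β i) / k := by
      field_simp
      ring
    calc (1 / (k : ℝ)) ^ 2 * variance (fun ω => ∑ l, Z l i ω) μ
        ≤ (1 / (k : ℝ)) ^ 2 * ((k : ℝ) * (α i + ((k : ℝ) - 1) * β i)) := by
          apply mul_le_mul_of_nonneg_left hSbound (by positivity)
      _ = β i + (α i - β i) / k := h3
  have hBnonneg : ∀ i, 0 ≤ B i := fun i => le_trans (variance_nonneg _ _) (hvarZb i)
  -- mean bound
  have hmeanZb : ∀ i, e i ≤ ∫ ω, Zbar i ω ∂μ := by
    intro i
    have hInt : ∀ l : Fin k, Integrable (Z l i) μ := fun l => (hZ l i).integrable one_le_two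
    have hint : ∫ ω, Zbar i ω ∂μ = (1 / (k : ℝ)) * ∑ l, ∫ ω, Z l i ω ∂μ := by
      simp_rw [hZbar]
      rw [integral_const_mul, integral_finset_sum _ fun l _ => hInt l]
    rw [hint]
    have hsum : (k : ℝ) * e i ≤ ∑ l, ∫ ω, Z l i ω ∂μ := by
      calc (k : ℝ) * e i = ∑ _l : Fin k, e i := by rw [Finset.sum_const, nsmul_eq_mul]; simp
        _ ≤ ∑ l, ∫ ω, Z l i ω ∂μ := Finset.sum_le_sum fun l _ => hmean l i
    calc e i = (1 / (k : ℝ)) * ((k : ℝ) * e i) := by field_simp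
      _ ≤ (1 / (k : ℝ)) * ∑ l, ∫ ω, Z l i ω ∂μ :=
          mul_le_mul_of_nonneg_left hsum (by positivity)
  -- Chebyshev per coordinate
  have key : ∀ i, μ {ω | Zbar i ω ≤ 0} ≤ ENNReal.ofReal (B i / e i ^ 2) := by
    intro i
    have cheb := meas_ge_le_variance_div_sq (hZbM i) (he i)
    have hsub : {ω | Zbar i ω ≤ 0} ⊆ {ω | e i ≤ |Zbar i ω - ∫ ω', Zbar i ω' ∂μ|} := by
      intro ω hω
      simp only [Set.mem_setOf_eq] at *
      have := hmeanZb i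
      rw [abs_sub_comm]
      calc e i ≤ (∫ ω', Zbar i ω' ∂μ) - Zbar i ω := by linarith
        _ ≤ |(∫ ω', Zbar i ω' ∂μ) - Zbar i ω| := le_abs_self _
    calc μ {ω | Zbar i ω ≤ 0} ≤ μ {ω | e i ≤ |Zbar i ω - ∫ ω', Zbar i ω' ∂μ|} :=
          measure_mono hsub
      _ ≤ ENNReal.ofReal (variance (Zbar i) μ / e i ^ 2) := cheb
      _ ≤ ENNReal.ofReal (B i / e i ^ 2) := by
          apply ENNReal.ofReal_le_ofReal
          gcongr
          exact hvarZb i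
  -- union bound and conclusion
  set A := {ω | ∀ i, 0 < Zbar i ω} with hA
  have hcompl : Aᶜ ⊆ ⋃ i, {ω | Zbar i ω ≤ 0} := by
    intro ω hω
    simp only [hA, Set.mem_compl_iff, Set.mem_setOf_eq, not_forall, not_lt] at hω
    obtain ⟨i, hi⟩ := hω
    exact Set.mem_iUnion.2 ⟨i, hi⟩
  have h1 : μ Aᶜ ≤ ENNReal.ofReal (∑ i, B i / e i ^ 2) := by
    calc μ Aᶜ ≤ ∑ i, μ {ω | Zbar i ω ≤ 0} :=
          (measure_mono hcompl).trans (measure_iUnion_fintype_le _ _)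
      _ ≤ ∑ i, ENNReal.ofReal (B i / e i ^ 2) := Finset.sum_le_sum fun i _ => key i
      _ = ENNReal.ofReal (∑ i, B i / e i ^ 2) :=
          (ENNReal.ofReal_sum_of_nonneg fun i _ =>
            div_nonneg (hBnonneg i) (sq_nonneg _)).symm
  have hAfin : μ A ≠ ⊤ := measure_ne_top μ _
  have hAcfin : μ Aᶜ ≠ ⊤ := measure_ne_top μ _
  have h2 : (1 : ENNReal) ≤ μ A + μ Aᶜ := by
    rw [← measure_univ (μ := μ), ← Set.union_compl_self A]
    exact measure_union_le _ _
  have h3 : (1 : ℝ) ≤ (μ A).toReal + (μ Aᶜ).toReal := by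
    have h := ENNReal.toReal_mono (ENNReal.add_ne_top.2 ⟨hAfin, hAcfin⟩) h2
    rwa [ENNReal.toReal_one, ENNReal.toReal_add hAfin hAcfin] at h
  have h4 : (μ Aᶜ).toReal ≤ ∑ i, B i / e i ^ 2 :=
    ENNReal.toReal_le_of_le_ofReal
      (Finset.sum_nonneg fun i _ => div_nonneg (hBnonneg i) (sq_nonneg _)) h1
  linarith
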